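/- arXiv:1508.01530 — 3 statements merged into one kernel-verified Lean document; each statement's English description precedes it below -/
import Mathlib

section
/- The identity element 1 of a unital Banach algebra A is an extreme point of the closed unit ball of A. -/
/-!
Write `u = 1 + a` and `v = 1 - a`, so that `‖1 + a‖ ≤ 1` and `‖1 - a‖ ≤ 1`. The spectrum of `a` then
lies in the two closed unit discs centred at `-1` and `1`, which meet only in `0`: `a` is
quasinilpotent. Moreover `exp (t • a) = e⁻ᵗ • exp (t • (1 + a))` has norm at most `1` for `t ≥ 0`,
and symmetrically for `t ≤ 0`. Quasinilpotency makes `z ↦ exp (z • a)` an entire function of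
exponential type zero; being bounded on `ℝ`, it is bounded on `ℂ` by Phragmén–Lindelöf, hence
constant by Liouville, and its derivative `a` at `0` vanishes.
-/

open Filter Topology

def HasExpTypeZero {E : Type*} [NormedAddCommGroup E] (f : ℂ → E) : Prop :=
  ∀ ε > 0, ∃ C, ∀ z, ‖f z‖ ≤ C * Real.exp (ε * ‖z‖)

namespace HasExpTypeZero

open Complex

variable {E : Type*} [NormedAddCommGroup E] {f : ℂ → E}

theorem comp_neg (hgrowth : HasExpTypeZero f) : HasExpTypeZero fun z ↦ f (-z) := fun ε hε ↦
  (hgrowth ε hε).imp fun _ hC z ↦ by simpa using hC (-z)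

variable [NormedSpace ℂ E] {M : ℝ}

theorem norm_le_of_im_nonneg (hgrowth : HasExpTypeZero f) (hf : Differentiable ℂ f)
    (hreal : ∀ x : ℝ, ‖f x‖ ≤ M) {z : ℂ} (hz : 0 ≤ z.im) : ‖f z‖ ≤ M := by
  -- Rotate to the right half-plane and damp by `exp (-ε ζ)`: the damped function is bounded on the
  -- positive real axis, so Phragmén–Lindelöf applies; then let `ε → 0`.
  obtain ⟨ζ, hζ, rfl⟩ : ∃ ζ : ℂ, 0 ≤ ζ.re ∧ I * ζ = z :=
    ⟨-I * z, by simpa using hz, by rw [← mul_assoc]; simp⟩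
  suffices ∀ᶠ ε : ℝ in 𝓝[>] 0, ‖exp (-ε * ζ) • f (I * ζ)‖ ≤ M by
    refine le_of_tendsto (Tendsto.mono_left ?_ nhdsWithin_le_nhds) this
    exact Continuous.tendsto' (by fun_prop) _ _ (by simp)
  filter_upwards [self_mem_nhdsWithin] with ε (hε : 0 < ε)
  obtain ⟨C, hC⟩ := hgrowth ε hε
  have hg : ∀ w, ‖exp (-ε * w) • f (I * w)‖ = Real.exp (-ε * w.re) * ‖f (I * w)‖ := fun w ↦ by
    rw [norm_smul, norm_exp, ← ofReal_neg, re_ofReal_mul]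
  have hdiff : Differentiable ℂ fun w ↦ cexp (-ε * w) • f (I * w) :=
    (differentiable_id.const_mul _).cexp.smul (hf.comp (differentiable_id.const_mul _))
  refine PhragmenLindelof.right_half_plane_of_bounded_on_real hdiff.diffContOnCl
    ⟨1, one_lt_two, ε, .of_bound C ?_⟩ ⟨C, eventually_map.2 ?_⟩ (fun y ↦ ?_) hζ
  · filter_upwards [le_principal_iff.1 inf_le_right] with w (hw : 0 < w.re)
    rw [Real.rpow_one, Real.norm_of_nonneg (Real.exp_nonneg _), hg]
    calc Real.exp (-ε * w.re) * ‖f (I * w)‖ ≤ 1 * ‖f (I * w)‖ := by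
          gcongr
          exact Real.exp_le_one_iff.2 (by nlinarith)
      _ ≤ C * Real.exp (ε * ‖w‖) := by simpa using hC (I * w)
  · filter_upwards [eventually_ge_atTop (0 : ℝ)] with x hx
    have h := hC (I * x)
    rw [norm_mul, norm_I, one_mul, norm_real, Real.norm_of_nonneg hx] at h
    calc ‖cexp (-ε * x) • f (I * x)‖ = Real.exp (-ε * x) * ‖f (I * x)‖ := by rw [hg, ofReal_re]
      _ ≤ Real.exp (-ε * x) * (C * Real.exp (ε * x)) := by gcongr
      _ = C := by rw [mul_left_comm, ← Real.exp_add]; simp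
  · rw [hg, show I * (y * I) = ((-y : ℝ) : ℂ) by push_cast; ring_nf; rw [I_sq]; ring]
    simpa using hreal (-y)

theorem norm_le (hgrowth : HasExpTypeZero f) (hf : Differentiable ℂ f)
    (hreal : ∀ x : ℝ, ‖f x‖ ≤ M) (z : ℂ) : ‖f z‖ ≤ M := by
  rcases le_total 0 z.im with hz | hz
  · exact hgrowth.norm_le_of_im_nonneg hf hreal hz
  · simpa using hgrowth.comp_neg.norm_le_of_im_nonneg (hf.comp differentiable_neg)
      (fun x ↦ by simpa using hreal (-x)) (z := -z) (by simpa using hz)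

end HasExpTypeZero

open NormedSpace

section BanachAlgebra

variable {A : Type*} [NormedRing A] [NormedAlgebra ℂ A]

theorem norm_exp_le_mul_exp_of_norm_pow_le {x : A} {C r : ℝ} (h : ∀ n, ‖x ^ n‖ ≤ C * r ^ n) :
    ‖exp x‖ ≤ C * Real.exp r := by
  rw [exp_eq_tsum ℂ, Real.exp_eq_exp_ℝ, exp_eq_tsum_div, ← tsum_mul_left]
  refine (norm_tsum_le_tsum_norm (norm_expSeries_summable' x)).trans <|
    (norm_expSeries_summable' x).tsum_le_tsum (fun n ↦ ?_)
      ((Real.summable_pow_div_factorial r).mul_left C)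
  rw [norm_smul, norm_inv, Complex.norm_natCast, mul_div_assoc', inv_mul_eq_div]
  gcongr
  exact h n

theorem exists_norm_pow_le_mul_pow_of_spectralRadius_lt [CompleteSpace A] (a : A) {r : ℝ}
    (hr : spectralRadius ℂ a < ENNReal.ofReal r) : ∃ C, ∀ n, ‖a ^ n‖ ≤ C * r ^ n := by
  have hr₀ : 0 < r := ENNReal.ofReal_pos.1 (pos_of_gt hr)
  have hev : ∀ᶠ n : ℕ in atTop, ‖a ^ n‖ / r ^ n ≤ 1 := by
    filter_upwards [eventually_ge_atTop 1,
      (spectrum.pow_norm_pow_one_div_tendsto_nhds_spectralRadius a).eventually_lt_const hr]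
      with n hn₁ hn
    rw [ENNReal.ofReal_lt_ofReal_iff hr₀] at hn
    rw [one_div, Real.rpow_inv_lt_iff_of_pos (norm_nonneg _) hr₀.le (by positivity),
      Real.rpow_natCast] at hn
    exact (div_le_one (by positivity)).2 hn.le
  obtain ⟨C, hC⟩ := (isBoundedUnder_of_eventually_le hev).bddAbove_range
  refine ⟨C, fun n ↦ ?_⟩
  have := hC ⟨n, rfl⟩
  rwa [div_le_iff₀ (by positivity)] at this

theorem norm_exp_le_exp_norm [NormOneClass A] (x : A) : ‖exp x‖ ≤ Real.exp ‖x‖ := by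
  simpa using norm_exp_le_mul_exp_of_norm_pow_le (C := 1) fun n ↦ by
    simpa using norm_pow_le x n

theorem norm_exp_ofReal_smul_le [NormOneClass A] [CompleteSpace A] (a : A) {t : ℝ} (ht : 0 ≤ t) :
    ‖exp ((t : ℂ) • a)‖ ≤ Real.exp (t * (‖1 + a‖ - 1)) := by
  let +nondep : NormedAlgebra ℚ A := .restrictScalars ℚ ℂ A
  have hsplit : (t : ℂ) • a = (t : ℂ) • (1 + a) + algebraMap ℂ A (-t) := by
    rw [Algebra.algebraMap_eq_smul_one, smul_add, neg_smul, add_neg_cancel_comm]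
  rw [hsplit, exp_add_of_commute (Algebra.commutes _ _).symm, ← algebraMap_exp_comm]
  calc ‖exp ((t : ℂ) • (1 + a)) * algebraMap ℂ A (exp (-t : ℂ))‖
      ≤ Real.exp ‖(t : ℂ) • (1 + a)‖ * Real.exp (-t) := by
        refine (norm_mul_le _ _).trans ?_
        rw [norm_algebraMap', ← Complex.exp_eq_exp_ℂ, ← Complex.ofReal_neg, ← Complex.ofReal_exp,
          Complex.norm_real, Real.norm_of_nonneg (Real.exp_nonneg _)]
        gcongr
        exact norm_exp_le_exp_norm _
    _ = Real.exp (t * (‖1 + a‖ - 1)) := by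
        rw [norm_smul, Complex.norm_real, Real.norm_of_nonneg ht, ← Real.exp_add]
        ring_nf

theorem spectralRadius_eq_zero_of_norm_one_add_le_one_of_norm_one_sub_le_one [NormOneClass A]
    [CompleteSpace A] {a : A} (hplus : ‖1 + a‖ ≤ 1) (hminus : ‖1 - a‖ ≤ 1) :
    spectralRadius ℂ a = 0 := by
  refine le_antisymm (iSup₂_le fun z hz ↦ ?_) bot_le
  have hz_add : ‖1 + z‖ ≤ 1 := by
    have := spectrum.subset_closedBall_norm (1 + a) (by
      rw [← map_one (algebraMap ℂ A), ← spectrum.singleton_add_eq]; exact Set.add_mem_add rfl hz)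
    exact (mem_closedBall_zero_iff.1 this).trans hplus
  have hz_sub : ‖1 - z‖ ≤ 1 := by
    have := spectrum.subset_closedBall_norm (1 - a) (by
      rw [← map_one (algebraMap ℂ A), ← spectrum.singleton_sub_eq]; exact Set.sub_mem_sub rfl hz)
    exact (mem_closedBall_zero_iff.1 this).trans hminus
  have hpar := parallelogram_law_with_norm ℝ (1 : ℂ) z
  rw [norm_one] at hpar
  have hz0 : z = 0 := by
    simpa using (show ‖z‖ ^ 2 ≤ 0 by
      nlinarith [pow_le_one₀ (n := 2) (norm_nonneg _) hz_add,
        pow_le_one₀ (n := 2) (norm_nonneg _) hz_sub])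
  simp [hz0]

theorem hasExpTypeZero_exp_smul [CompleteSpace A] {a : A} (ha : spectralRadius ℂ a = 0) :
    HasExpTypeZero fun z : ℂ ↦ exp (z • a) := by
  intro ε hε
  obtain ⟨C, hC⟩ := exists_norm_pow_le_mul_pow_of_spectralRadius_lt a (r := ε)
    (by rw [ha]; exact ENNReal.ofReal_pos.2 hε)
  refine ⟨C, fun z ↦ norm_exp_le_mul_exp_of_norm_pow_le fun n ↦ ?_⟩
  calc ‖(z • a) ^ n‖ = ‖z‖ ^ n * ‖a ^ n‖ := by rw [smul_pow, norm_smul, norm_pow]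
    _ ≤ ‖z‖ ^ n * (C * ε ^ n) := by gcongr; exact hC n
    _ = C * (ε * ‖z‖) ^ n := by ring

theorem eq_zero_of_spectralRadius_eq_zero_of_norm_exp_le [CompleteSpace A] {a : A} {M : ℝ}
    (ha : spectralRadius ℂ a = 0) (hbdd : ∀ t : ℝ, ‖exp ((t : ℂ) • a)‖ ≤ M) : a = 0 := by
  have hderiv (z : ℂ) := hasDerivAt_exp_smul_const (𝕂 := ℂ) a z
  have hdiff : Differentiable ℂ fun z : ℂ ↦ exp (z • a) := fun z ↦ (hderiv z).differentiableAt
  have hbounded : Bornology.IsBounded (Set.range fun z : ℂ ↦ exp (z • a)) :=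
    isBounded_iff_forall_norm_le.2
      ⟨M, Set.forall_mem_range.2 ((hasExpTypeZero_exp_smul ha).norm_le hdiff hbdd)⟩
  have hconst : (fun z : ℂ ↦ exp (z • a)) = fun _ ↦ 1 := by
    funext z
    simpa using hdiff.apply_eq_apply_of_bounded hbounded z 0
  have h0 := hderiv 0
  rw [hconst] at h0
  simpa using h0.unique (hasDerivAt_const 0 1)

theorem eq_zero_of_norm_one_add_le_one_of_norm_one_sub_le_one [NormOneClass A] [CompleteSpace A]
    {a : A} (hplus : ‖1 + a‖ ≤ 1) (hminus : ‖1 - a‖ ≤ 1) : a = 0 := by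
  refine eq_zero_of_spectralRadius_eq_zero_of_norm_exp_le
    (spectralRadius_eq_zero_of_norm_one_add_le_one_of_norm_one_sub_le_one hplus hminus)
    (M := 1) fun t ↦ ?_
  rcases le_total 0 t with ht | ht
  · refine (norm_exp_ofReal_smul_le a ht).trans (Real.exp_le_one_iff.2 ?_)
    exact mul_nonpos_of_nonneg_of_nonpos ht (by linarith)
  · have h := norm_exp_ofReal_smul_le (-a) (neg_nonneg.2 ht)
    rw [← sub_eq_add_neg, Complex.ofReal_neg, neg_smul_neg] at h
    refine h.trans (Real.exp_le_one_iff.2 ?_)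
    exact mul_nonpos_of_nonneg_of_nonpos (neg_nonneg.2 ht) (by linarith)

end BanachAlgebra

/-- The identity of a unital complex Banach algebra (with ‖1‖ = 1)
is an extreme point of the closed unit ball. -/
theorem stmt_1 {A : Type*} [NormedRing A] [NormedAlgebra ℂ A] [CompleteSpace A]
    [NormOneClass A]
    (u v : A) (hu : ‖u‖ ≤ 1) (hv : ‖v‖ ≤ 1)
    (h : (1 : A) = (2⁻¹ : ℂ) • (u + v)) :
    u = 1 ∧ v = 1 := by
  have hsum : u + v = 1 + 1 := by
    rw [← two_smul ℂ (1 : A), h, smul_smul]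
    norm_num
  have hv_eq : v = 1 - (u - 1) := by
    calc v = u + v - u := by abel
      _ = 1 - (u - 1) := by rw [hsum]; abel
  have ha : u - 1 = 0 :=
    eq_zero_of_norm_one_add_le_one_of_norm_one_sub_le_one (by rwa [add_sub_cancel]) (hv_eq ▸ hv)
  rw [ha, sub_zero] at hv_eq
  exact ⟨sub_eq_zero.1 ha, hv_eq⟩
end

section
/- Let T be a self-adjoint element of a C*-algebra, written both as T = T₊ − T₋ (the canonical decomposition with T₊T₋ = 0, T₊, T₋ ≥ 0) and as T = R − S with R, S ≥ 0. Then ‖T₊‖ ≤ ‖R‖. -/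
lemma aux_norm_cube {A : Type*} [NormedRing A] [StarRing A] [CStarRing A]
    [CompleteSpace A] [NormedAlgebra ℂ A] [StarModule ℂ A]
    [PartialOrder A] [StarOrderedRing A] (a : A) (ha : 0 ≤ a) :
    ‖a‖ ^ 3 ≤ ‖a ^ 3‖ := by
  letI : CStarAlgebra A := ⟨⟩
  rcases subsingleton_or_nontrivial A with h | h
  · simp [Subsingleton.elim a 0]
  · have h1 : ‖a‖ ∈ spectrum ℝ a := CStarAlgebra.norm_mem_spectrum_of_nonneg ha
    have h2 : ‖a‖ ^ 3 ∈ spectrum ℝ (a ^ 3) := by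
      have hmap := cfc_map_spectrum (fun x : ℝ => x ^ 3) a
      rw [cfc_pow_id a 3] at hmap
      rw [hmap]
      exact ⟨‖a‖, h1, rfl⟩
    calc ‖a‖ ^ 3 ≤ ‖‖a‖ ^ 3‖ := Real.le_norm_self _
      _ ≤ ‖a ^ 3‖ := spectrum.norm_le_norm_of_mem h2

/-- If T is self-adjoint in a C*-algebra, T = T₊ − T₋ is its
canonical decomposition (T₊, T₋ ≥ 0, T₊T₋ = 0), and T = R − S with R, S ≥ 0,
then ‖T₊‖ ≤ ‖R‖. -/
theorem stmt_14 {A : Type*} [NormedRing A] [StarRing A] [CStarRing A]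
    [CompleteSpace A] [NormedAlgebra ℂ A] [StarModule ℂ A]
    [PartialOrder A] [StarOrderedRing A]
    (T Tp Tn R S : A) (hsa : IsSelfAdjoint T)
    (hTp : 0 ≤ Tp) (hTn : 0 ≤ Tn) (hdecomp : T = Tp - Tn) (horth : Tp * Tn = 0)
    (hR : 0 ≤ R) (hS : 0 ≤ S) (hRS : T = R - S) :
    ‖Tp‖ ≤ ‖R‖ := by
  letI : CStarAlgebra A := ⟨⟩
  have hTR : T ≤ R := by
    rw [hRS]
    calc R - S ≤ R - 0 := sub_le_sub_left hS R
      _ = R := by simp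
  have hstar : star Tp = Tp := IsSelfAdjoint.of_nonneg hTp
  have hconj : Tp * T * Tp ≤ Tp * R * Tp := by
    have := star_left_conjugate_le_conjugate hTR Tp
    rwa [hstar] at this
  have hcube : Tp * T * Tp = Tp ^ 3 := by
    rw [hdecomp, mul_sub, sub_mul, horth, zero_mul, sub_zero]
    noncomm_ring
  rw [hcube] at hconj
  have h3 : (0 : A) ≤ Tp ^ 3 := by
    have := star_left_conjugate_nonneg hTp Tp
    rw [hstar] at this
    convert this using 1
    noncomm_ring
  have hn : ‖Tp ^ 3‖ ≤ ‖Tp * R * Tp‖ :=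
    CStarAlgebra.norm_le_norm_of_nonneg_of_le h3 hconj
  have hn2 : ‖Tp * R * Tp‖ ≤ ‖Tp‖ * ‖R‖ * ‖Tp‖ := by
    calc ‖Tp * R * Tp‖ ≤ ‖Tp * R‖ * ‖Tp‖ := norm_mul_le _ _
      _ ≤ ‖Tp‖ * ‖R‖ * ‖Tp‖ :=
        mul_le_mul_of_nonneg_right (norm_mul_le _ _) (norm_nonneg _)
  have key : ‖Tp‖ ^ 3 ≤ ‖Tp‖ ^ 2 * ‖R‖ := by
    calc ‖Tp‖ ^ 3 ≤ ‖Tp ^ 3‖ := aux_norm_cube Tp hTp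
      _ ≤ ‖Tp‖ * ‖R‖ * ‖Tp‖ := hn.trans hn2
      _ = ‖Tp‖ ^ 2 * ‖R‖ := by ring
  rcases eq_or_lt_of_le (norm_nonneg Tp) with h0 | h0
  · rw [← h0]; exact norm_nonneg R
  · nlinarith [mul_pos h0 h0, key]
end

section
/- Let A be the subalgebra of M₅(ℂ) consisting of all matrices of the form [[λ, ν, c, 0, 0],[0, λ, ν, 0, 0],[0, 0, λ, 0, 0],[0, 0, 0, λ, 2ν],[0, 0, 0, 0, λ]] with λ, ν, c ∈ ℂ. Then A is a unital subalgebra of M₅(ℂ), and the linear idempotent map P : A → A which replaces the (1,3) entry c by 0 has range which is not closed under multiplication (indeed not closed under squares), while the kernel of P (the span of the matrix unit E₁₃) is a two-sided ideal of A with square zero. -/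
open Matrix

/-! The algebra is spanned by `1`, `N` and `E = N²`, with `N E = E N = E² = 0`; these relations
alone make the span closed under products and `ℂ E` a square-zero ideal. Since `N²` has a
nonzero `(0, 2)` entry while every matrix `l • 1 + n • N` vanishes there, the span of `1` and `N`
is not closed under squares. -/

section SquareZeroExtension

variable {R A : Type*} [CommRing R] [Ring A] [Algebra R A] {N E : A}

theorem smul_one_add_smul_add_smul_mul_smul_one_add_smul_add_smul
    (hNN : N * N = E) (hNE : N * E = 0) (hEN : E * N = 0) (hEE : E * E = 0)
    (l₁ n₁ c₁ l₂ n₂ c₂ : R) :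
    (l₁ • (1 : A) + n₁ • N + c₁ • E) * (l₂ • (1 : A) + n₂ • N + c₂ • E) =
      (l₁ * l₂) • (1 : A) + (l₁ * n₂ + n₁ * l₂) • N + (l₁ * c₂ + c₁ * l₂ + n₁ * n₂) • E := by
  simp only [add_mul, mul_add, hNN, hNE, hEN, hEE, smul_zero, one_mul, mul_one,
    mul_smul_comm, smul_mul_assoc]
  module

theorem smul_one_add_smul_add_smul_mul_smul
    (hNE : N * E = 0) (hEE : E * E = 0) (l n c d : R) :
    (l • (1 : A) + n • N + c • E) * (d • E) = (l * d) • E := by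
  simp only [add_mul, smul_mul_smul, hNE, hEE, smul_zero, one_mul, add_zero]

theorem smul_mul_smul_one_add_smul_add_smul
    (hEN : E * N = 0) (hEE : E * E = 0) (d l n c : R) :
    (d • E) * (l • (1 : A) + n • N + c • E) = (d * l) • E := by
  simp only [mul_add, smul_mul_smul, hEN, hEE, smul_zero, mul_one, add_zero]

end SquareZeroExtension

section JordanNilpotent

variable (α : Type*) [Semiring α]

def jordanNilpotent : Matrix (Fin 5) (Fin 5) α :=
  single 0 1 1 + single 1 2 1 + (2 : α) • single 3 4 1

variable {α}

theorem jordanNilpotent_mul_self :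
    jordanNilpotent α * jordanNilpotent α = single 0 2 1 := by
  simp [jordanNilpotent, add_mul, mul_add, single_mul_single_same, single_mul_single_of_ne]

theorem jordanNilpotent_mul_single_zero_two :
    jordanNilpotent α * single 0 2 1 = 0 := by
  simp [jordanNilpotent, add_mul, single_mul_single_of_ne]

theorem single_zero_two_mul_jordanNilpotent :
    single 0 2 1 * jordanNilpotent α = 0 := by
  simp [jordanNilpotent, mul_add, single_mul_single_of_ne]

theorem single_zero_two_mul_self :
    (single 0 2 1 : Matrix (Fin 5) (Fin 5) α) * single 0 2 1 = 0 := by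
  simp [single_mul_single_of_ne]

end JordanNilpotent

theorem single_zero_two_ne_smul_one_add_smul_jordanNilpotent (l n : ℂ) :
    single 0 2 1 ≠ l • (1 : Matrix (Fin 5) (Fin 5) ℂ) + n • jordanNilpotent ℂ := by
  intro h
  simpa [jordanNilpotent, single, one_apply] using congrFun (congrFun h 0) 2

/-- Let A ⊆ M₅(ℂ) consist of all matrices
λ·I + ν·(E₁₂ + E₂₃ + 2E₄₅) + c·E₁₃.  Then A is a unital subalgebra of M₅(ℂ);
the idempotent map P replacing the (1,3) entry c by 0 has range
R = {λ·I + ν·N} which is not closed under multiplication (not even under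
squares), while its kernel K = ℂ·E₁₃ is a two-sided ideal of A with square
zero. -/
theorem stmt_16
    (N E : Matrix (Fin 5) (Fin 5) ℂ)
    (hN : N = Matrix.single 0 1 1 + Matrix.single 1 2 1 +
      (2 : ℂ) • Matrix.single 3 4 1)
    (hE : E = Matrix.single 0 2 1)
    (S R K : Set (Matrix (Fin 5) (Fin 5) ℂ))
    (hS : S = {M | ∃ l n c : ℂ, M = l • (1 : Matrix (Fin 5) (Fin 5) ℂ) + n • N + c • E})
    (hR : R = {M | ∃ l n : ℂ, M = l • (1 : Matrix (Fin 5) (Fin 5) ℂ) + n • N})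
    (hK : K = {M | ∃ c : ℂ, M = c • E}) :
    (1 : Matrix (Fin 5) (Fin 5) ℂ) ∈ S ∧
    (∀ M ∈ S, ∀ M' ∈ S, M * M' ∈ S) ∧
    (∃ M ∈ R, M * M ∉ R) ∧
    (∀ k ∈ K, ∀ k' ∈ K, k * k' = 0) ∧
    (∀ M ∈ S, ∀ k ∈ K, M * k ∈ K ∧ k * M ∈ K) := by
  subst hS hR hK
  have hNN : N * N = E := hN ▸ hE ▸ jordanNilpotent_mul_self
  have hNE : N * E = 0 := hN ▸ hE ▸ jordanNilpotent_mul_single_zero_two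
  have hEN : E * N = 0 := hN ▸ hE ▸ single_zero_two_mul_jordanNilpotent
  have hEE : E * E = 0 := hE ▸ single_zero_two_mul_self
  refine ⟨⟨1, 0, 0, by simp⟩, ?_, ?_, ?_, ?_⟩
  · rintro _ ⟨l₁, n₁, c₁, rfl⟩ _ ⟨l₂, n₂, c₂, rfl⟩
    exact ⟨_, _, _, smul_one_add_smul_add_smul_mul_smul_one_add_smul_add_smul hNN hNE hEN hEE ..⟩
  · refine ⟨N, ⟨0, 1, by simp⟩, ?_⟩
    rintro ⟨l, n, h⟩
    subst hN hE
    exact single_zero_two_ne_smul_one_add_smul_jordanNilpotent l n (hNN ▸ h)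
  · rintro _ ⟨c, rfl⟩ _ ⟨c', rfl⟩
    rw [smul_mul_smul, hEE, smul_zero]
  · rintro _ ⟨l, n, c, rfl⟩ _ ⟨d, rfl⟩
    exact ⟨⟨_, smul_one_add_smul_add_smul_mul_smul hNE hEE ..⟩,
      ⟨_, smul_mul_smul_one_add_smul_add_smul hEN hEE ..⟩⟩
end
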